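/- Let u_1 u_2 u_3 u_4 u_1 be a chordless 4-cycle C_4, and suppose to each vertex u of C_4 there are assigned real numbers l_x(u) ≤ r_x(u), l_y(u) ≤ r_y(u) and a bend point 𝚋_u = (x(𝚋_u), y(𝚋_u)) with x(𝚋_u) ∈ {l_x(u), r_x(u)} and y(𝚋_u) ∈ {l_y(u), r_y(u)}, such that for all distinct vertices u, v: u and v are adjacent in C_4 if and only if the pair (u, v) satisfies condition (1) or condition (2). If the pairs (u_1, u_2) and (u_1, u_4) both satisfy condition (1), or both satisfy condition (2), then 𝚋_{u_2} = 𝚋_{u_4}. -/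
import Mathlib


/-- Condition (1) for vertices `i`, `j` with one-bend path data: the bend points have
equal `x`-coordinate and the vertical extents overlap in more than one point. -/
def Cond1 (lx rx ly ry bx byc : Fin 4 → ℝ) (i j : Fin 4) : Prop :=
  bx i = bx j ∧ (Set.Icc (ly i) (ry i) ∩ Set.Icc (ly j) (ry j)).Nontrivial

/-- Condition (2) for vertices `i`, `j` with one-bend path data: the bend points have
equal `y`-coordinate and the horizontal extents overlap in more than one point. -/
def Cond2 (lx rx ly ry bx byc : Fin 4 → ℝ) (i j : Fin 4) : Prop :=
  byc i = byc j ∧ (Set.Icc (lx i) (rx i) ∩ Set.Icc (lx j) (rx j)).Nontrivial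

/-- Adjacency in the 4-cycle `u₁u₂u₃u₄u₁` (vertices `u₁, …, u₄` represented by
`0, …, 3 : Fin 4`). -/
def C4Adj (i j : Fin 4) : Prop :=
  ((i : ℕ) + 1) % 4 = (j : ℕ) ∨ ((j : ℕ) + 1) % 4 = (i : ℕ)

/-- Extract two ordered points from a nontrivial set. -/
lemma nt_pts {S : Set ℝ} (h : S.Nontrivial) : ∃ a b, a ∈ S ∧ b ∈ S ∧ a < b := by
  obtain ⟨a, ha, b, hb, hne⟩ := h
  rcases hne.lt_or_gt with h | h
  · exact ⟨a, b, ha, hb, h⟩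
  · exact ⟨b, a, hb, ha, h⟩

lemma mem_of_endpoint {c l r : ℝ} (h : c = l ∨ c = r) (hle : l ≤ r) : c ∈ Set.Icc l r := by
  rcases h with h | h <;> subst h
  · exact ⟨le_rfl, hle⟩
  · exact ⟨hle, le_rfl⟩

/-- Key interval lemma: intervals on a line; `I₀` meets `I₁` and `I₃` nontrivially,
`I₁ ∩ I₃` has at most one point, `I₂` meets `I₁` nontrivially and `I₂ ∩ I₃ ≠ ∅`.
Then `I₀ ∩ I₂` is nontrivial. -/
lemma key (l0 r0 l1 r1 l2 r2 l3 r3 : ℝ)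
    (h01 : (Set.Icc l0 r0 ∩ Set.Icc l1 r1).Nontrivial)
    (h03 : (Set.Icc l0 r0 ∩ Set.Icc l3 r3).Nontrivial)
    (h13 : ¬ (Set.Icc l1 r1 ∩ Set.Icc l3 r3).Nontrivial)
    (h12 : (Set.Icc l1 r1 ∩ Set.Icc l2 r2).Nontrivial)
    (h23 : (Set.Icc l2 r2 ∩ Set.Icc l3 r3).Nonempty) :
    (Set.Icc l0 r0 ∩ Set.Icc l2 r2).Nontrivial := by
  obtain ⟨a, b, ⟨⟨ha0, ha0'⟩, ha1, ha1'⟩, ⟨⟨hb0, hb0'⟩, hb1, hb1'⟩, hab⟩ := nt_pts h01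
  obtain ⟨c, d, ⟨⟨hc0, hc0'⟩, hc3, hc3'⟩, ⟨⟨hd0, hd0'⟩, hd3, hd3'⟩, hcd⟩ := nt_pts h03
  obtain ⟨p, q, ⟨⟨hp1, hp1'⟩, hp2, hp2'⟩, ⟨⟨hq1, hq1'⟩, hq2, hq2'⟩, hpq⟩ := nt_pts h12
  obtain ⟨w, ⟨hw2, hw2'⟩, hw3, hw3'⟩ := h23
  -- orientation: r1 ≤ l3 or r3 ≤ l1
  have hor : r1 ≤ l3 ∨ r3 ≤ l1 := by
    by_contra hcon
    push_neg at hcon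
    obtain ⟨h31, h11⟩ := hcon
    apply h13
    refine ⟨max l1 l3, ⟨⟨le_max_left _ _, ?_⟩, le_max_right _ _, ?_⟩,
      min r1 r3, ⟨⟨?_, min_le_left _ _⟩, ?_, min_le_right _ _⟩, ne_of_lt ?_⟩
    · exact max_le (by linarith) (le_of_lt h31)
    · exact max_le (le_of_lt h11) (by linarith)
    · exact le_min (by linarith) (le_of_lt h11)
    · exact le_min (le_of_lt h31) (by linarith)
    · exact max_lt (lt_min (by linarith) h11) (lt_min h31 (by linarith))
  rcases hor with hor | hor
  · -- I1 left of I3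
    have hXY : max a p < min d w :=
      lt_of_lt_of_le (lt_of_lt_of_le (max_lt (by linarith) (by linarith)) hor)
        (le_min (by linarith) hw3)
    have hXa : a ≤ max a p := le_max_left _ _
    have hXp : p ≤ max a p := le_max_right _ _
    have hYd : min d w ≤ d := min_le_left _ _
    have hYw : min d w ≤ w := min_le_right _ _
    refine ⟨max a p, ⟨⟨by linarith, by linarith⟩, by linarith, by linarith⟩,
      min d w, ⟨⟨by linarith, by linarith⟩, by linarith, by linarith⟩, ne_of_lt hXY⟩
  · -- I3 left of I1
    have hXY : max c w < min b q :=
      lt_of_le_of_lt (le_trans (max_le (by linarith) hw3') hor)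
        (lt_min (by linarith) (by linarith))
    have hXc : c ≤ max c w := le_max_left _ _
    have hXw : w ≤ max c w := le_max_right _ _
    have hYb : min b q ≤ b := min_le_left _ _
    have hYq : min b q ≤ q := min_le_right _ _
    refine ⟨max c w, ⟨⟨by linarith, by linarith⟩, by linarith, by linarith⟩,
      min b q, ⟨⟨by linarith, by linarith⟩, by linarith, by linarith⟩, ne_of_lt hXY⟩

/-- Main lemma: the case where both pairs satisfy condition (1). -/
lemma mainA (lx rx ly ry bx byc : Fin 4 → ℝ)
    (hx : ∀ i, lx i ≤ rx i) (hy : ∀ i, ly i ≤ ry i)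
    (hbx : ∀ i, bx i = lx i ∨ bx i = rx i)
    (hby : ∀ i, byc i = ly i ∨ byc i = ry i)
    (hrep : ∀ i j : Fin 4, i ≠ j →
      (C4Adj i j ↔ Cond1 lx rx ly ry bx byc i j ∨ Cond2 lx rx ly ry bx byc i j))
    (h01 : Cond1 lx rx ly ry bx byc 0 1) (h03 : Cond1 lx rx ly ry bx byc 0 3) :
    bx 1 = bx 3 ∧ byc 1 = byc 3 := by
  have hbx13 : bx 1 = bx 3 := h01.1.symm.trans h03.1
  have n13 : ¬ (Cond1 lx rx ly ry bx byc 1 3 ∨ Cond2 lx rx ly ry bx byc 1 3) :=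
    fun h => (by unfold C4Adj; decide : ¬ C4Adj 1 3) ((hrep 1 3 (by decide)).mpr h)
  have n02 : ¬ (Cond1 lx rx ly ry bx byc 0 2 ∨ Cond2 lx rx ly ry bx byc 0 2) :=
    fun h => (by unfold C4Adj; decide : ¬ C4Adj 0 2) ((hrep 0 2 (by decide)).mpr h)
  have h13 : ¬ (Set.Icc (ly 1) (ry 1) ∩ Set.Icc (ly 3) (ry 3)).Nontrivial :=
    fun hnt => n13 (Or.inl ⟨hbx13, hnt⟩)
  have a12 : Cond1 lx rx ly ry bx byc 1 2 ∨ Cond2 lx rx ly ry bx byc 1 2 :=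
    (hrep 1 2 (by decide)).mp (by unfold C4Adj; decide)
  have a23 : Cond1 lx rx ly ry bx byc 2 3 ∨ Cond2 lx rx ly ry bx byc 2 3 :=
    (hrep 2 3 (by decide)).mp (by unfold C4Adj; decide)
  rcases a12 with ⟨e12, nt12⟩ | ⟨f12, _⟩ <;> rcases a23 with ⟨e23, nt23⟩ | ⟨f23, _⟩
  · -- Cond1(1,2), Cond1(2,3): contradiction via Cond1(0,2)
    exact absurd (Or.inl ⟨h01.1.trans e12,
      key _ _ _ _ _ _ _ _ h01.2 h03.2 h13 nt12 nt23.nonempty⟩) n02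
  · -- Cond1(1,2), Cond2(2,3): contradiction via Cond1(0,2)
    refine absurd (Or.inl ⟨h01.1.trans e12,
      key _ _ _ _ _ _ _ _ h01.2 h03.2 h13 nt12 ⟨byc 2, ?_, ?_⟩⟩) n02
    · exact mem_of_endpoint (hby 2) (hy 2)
    · exact f23 ▸ mem_of_endpoint (hby 3) (hy 3)
  · -- Cond2(1,2), Cond1(2,3): contradiction via Cond1(0,2)
    refine absurd (Or.inl ⟨h03.1.trans e23.symm, key _ _ _ _ _ _ _ _ h03.2 h01.2
      (fun h => h13 (Set.inter_comm _ _ ▸ h)) (Set.inter_comm _ _ ▸ nt23)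
      ⟨byc 2, ?_, ?_⟩⟩) n02
    · exact mem_of_endpoint (hby 2) (hy 2)
    · exact f12.symm ▸ mem_of_endpoint (hby 1) (hy 1)
  · -- Cond2(1,2), Cond2(2,3)
    exact ⟨hbx13, f12.trans f23⟩

/-- given data of a B₁-EPG representation of the chordless 4-cycle
`u₁u₂u₃u₄u₁`, if the pairs `(u₁, u₂)` and `(u₁, u₄)` both satisfy condition (1) or
both satisfy condition (2), then the bend points of `u₂` and `u₄` coincide. -/
theorem stmt17 (lx rx ly ry bx byc : Fin 4 → ℝ)
    (hx : ∀ i, lx i ≤ rx i) (hy : ∀ i, ly i ≤ ry i)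
    (hbx : ∀ i, bx i = lx i ∨ bx i = rx i)
    (hby : ∀ i, byc i = ly i ∨ byc i = ry i)
    (hrep : ∀ i j : Fin 4, i ≠ j →
      (C4Adj i j ↔ Cond1 lx rx ly ry bx byc i j ∨ Cond2 lx rx ly ry bx byc i j))
    (hcase : (Cond1 lx rx ly ry bx byc 0 1 ∧ Cond1 lx rx ly ry bx byc 0 3) ∨
      (Cond2 lx rx ly ry bx byc 0 1 ∧ Cond2 lx rx ly ry bx byc 0 3)) :
    bx 1 = bx 3 ∧ byc 1 = byc 3 := by
  rcases hcase with ⟨h1, h2⟩ | ⟨h1, h2⟩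
  · exact mainA lx rx ly ry bx byc hx hy hbx hby hrep h1 h2
  · have := mainA ly ry lx rx byc bx hy hx hby hbx
      (fun i j h => (hrep i j h).trans or_comm) h1 h2
    exact ⟨this.2, this.1⟩
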